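/- Suppose the magnetic field B = B(t) is independent of x (possibly time-dependent), and let E(x,t) be continuously differentiable. Then the one-step map (xⁿ, v^{n−1/2}) ↦ (x^{n+1}, v^{n+1/2}) of the filtered Boris algorithm preserves volume in phase space ℝ³ × ℝ³ exactly: its Jacobian matrix has determinant 1. (The map is a composition of the shear v^{n−1/2} ↦ v^{n−1/2} + (h/2)Ψ(hB̂(tⁿ))E(xⁿ,tⁿ) that changes only the velocity by a function of the position, the rotation v ↦ exp(−hB̂(tⁿ))v by an orthogonal matrix of determinant 1, a second such shear, and the shear xⁿ ↦ xⁿ + h v^{n+1/2} that changes only the position by a function of the velocity.) -/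

import Mathlib

/-!
The one-step map factors as kick ∘ rotation ∘ kick followed by a drift, where a kick
`(x, v) ↦ (x, v + φ x)` and a drift `(x, v) ↦ (x + ψ v, v)` have block-unitriangular Jacobians,
and the rotation `v ↦ exp(-h B̂) v` has determinant `1` because `B̂` is skew-symmetric. The chain
rule multiplies these determinants.
-/

noncomputable section

attribute [local instance] Matrix.normedAddCommGroup Matrix.normedSpace

/-- The skew-symmetric matrix `B̂` associated with `B ∈ ℝ³`, so that `B̂ v = B × v`. -/
def hat (B : Fin 3 → ℝ) : Matrix (Fin 3) (Fin 3) ℝ :=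
  !![0, -B 2, B 1; B 2, 0, -B 0; -B 1, B 0, 0]

/-- The Euclidean norm of a vector in `ℝ³`. -/
def enorm3 (B : Fin 3 → ℝ) : ℝ := Real.sqrt (B 0 ^ 2 + B 1 ^ 2 + B 2 ^ 2)

/-- `tanc(ξ) = tan(ξ)/ξ`, extended by `1` at `0`. -/
def tanc (x : ℝ) : ℝ := if x = 0 then 1 else Real.tan x / x

/-- The filter matrix `Ψ(hB̂)` with `Ψ(ζ) = tanch(ζ/2)`, evaluated via the Rodriguez-type
formula `Ψ(hB̂) = I + ((1 − tanc(hb/2))/b²) B̂²` with `b = |B|`. -/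
def PsiMat (h : ℝ) (B : Fin 3 → ℝ) : Matrix (Fin 3) (Fin 3) ℝ :=
  1 + ((1 - tanc (h * enorm3 B / 2)) / enorm3 B ^ 2) • hat B ^ 2

theorem LinearMap.det_fst_prod_snd_add_comp_fst {R M : Type*} [CommRing R] [AddCommGroup M]
    [Module R M] [Module.Free R M] [Module.Finite R M] (D : M →ₗ[R] M) :
    LinearMap.det ((fst R M M).prod (snd R M M + D ∘ₗ fst R M M)) = 1 := by
  let b := Module.Free.chooseBasis R M
  have hmat : toMatrix (b.prod b) (b.prod b) ((fst R M M).prod (snd R M M + D ∘ₗ fst R M M)) =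
      Matrix.fromBlocks 1 0 (toMatrix b b D) 1 := by
    ext (i | i) (j | j) <;>
      simp [toMatrix_apply, Module.Basis.prod_apply, Matrix.one_apply, Finsupp.single_apply,
        eq_comm]
  rw [← det_toMatrix (b.prod b), hmat, Matrix.det_fromBlocks_zero₁₂, Matrix.det_one, one_mul]

theorem LinearMap.det_fst_add_comp_snd_prod_snd {R M : Type*} [CommRing R] [AddCommGroup M]
    [Module R M] [Module.Free R M] [Module.Finite R M] (D : M →ₗ[R] M) :
    LinearMap.det ((fst R M M + D ∘ₗ snd R M M).prod (snd R M M)) = 1 := by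
  have hswap : (fst R M M + D ∘ₗ snd R M M).prod (snd R M M) =
      (LinearEquiv.prodComm R M M : M × M →ₗ[R] M × M) ∘ₗ
        (fst R M M).prod (snd R M M + D ∘ₗ fst R M M) ∘ₗ (LinearEquiv.prodComm R M M).symm := by
    apply LinearMap.ext
    rintro ⟨x, v⟩
    simp
  rw [hswap, det_conj, det_fst_prod_snd_add_comp_fst]

section PhaseSpace

variable {𝕜 E F : Type*} [NontriviallyNormedField 𝕜] [NormedAddCommGroup E] [NormedSpace 𝕜 E]
  [NormedAddCommGroup F] [NormedSpace 𝕜 F]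

variable (𝕜) in
def HasUnitJacobianAt (f : E → E) (x : E) : Prop :=
  DifferentiableAt 𝕜 f x ∧ LinearMap.det (fderiv 𝕜 f x : E →ₗ[𝕜] E) = 1

theorem HasUnitJacobianAt.comp {f g : E → E} {x : E} (hg : HasUnitJacobianAt 𝕜 g (f x))
    (hf : HasUnitJacobianAt 𝕜 f x) : HasUnitJacobianAt 𝕜 (g ∘ f) x := by
  refine ⟨hg.1.comp x hf.1, ?_⟩
  rw [fderiv_comp x hg.1 hf.1, ContinuousLinearMap.toLinearMap_comp, LinearMap.det_comp, hg.2,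
    hf.2, one_mul]

def kick (φ : E → E) (p : E × E) : E × E := (p.1, p.2 + φ p.1)

def drift (ψ : E → E) (p : E × E) : E × E := (p.1 + ψ p.2, p.2)

variable [FiniteDimensional 𝕜 E] [FiniteDimensional 𝕜 F]

theorem hasUnitJacobianAt_kick {φ : E → E} {p : E × E} (hφ : DifferentiableAt 𝕜 φ p.1) :
    HasUnitJacobianAt 𝕜 (kick φ) p := by
  have hderiv : HasFDerivAt (kick φ) ((ContinuousLinearMap.fst 𝕜 E E).prod
      (ContinuousLinearMap.snd 𝕜 E E + (fderiv 𝕜 φ p.1).comp (ContinuousLinearMap.fst 𝕜 E E))) p :=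
    hasFDerivAt_fst.prodMk (hasFDerivAt_snd.add (hφ.hasFDerivAt.comp p hasFDerivAt_fst))
  exact ⟨hderiv.differentiableAt, by
    rw [hderiv.fderiv]; exact LinearMap.det_fst_prod_snd_add_comp_fst _⟩

theorem hasUnitJacobianAt_drift {ψ : E → E} {p : E × E} (hψ : DifferentiableAt 𝕜 ψ p.2) :
    HasUnitJacobianAt 𝕜 (drift ψ) p := by
  have hderiv : HasFDerivAt (drift ψ) ((ContinuousLinearMap.fst 𝕜 E E +
      (fderiv 𝕜 ψ p.2).comp (ContinuousLinearMap.snd 𝕜 E E)).prod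
      (ContinuousLinearMap.snd 𝕜 E E)) p :=
    (hasFDerivAt_fst.add (hψ.hasFDerivAt.comp p hasFDerivAt_snd)).prodMk hasFDerivAt_snd
  exact ⟨hderiv.differentiableAt, by
    rw [hderiv.fderiv]; exact LinearMap.det_fst_add_comp_snd_prod_snd _⟩

theorem hasUnitJacobianAt_prodMap_id {A : E →L[𝕜] E} (hA : LinearMap.det (A : E →ₗ[𝕜] E) = 1)
    {p : F × E} : HasUnitJacobianAt 𝕜 (Prod.map id A) p := by
  have hderiv : HasFDerivAt (Prod.map id A) ((ContinuousLinearMap.id 𝕜 F).prodMap A) p :=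
    ((ContinuousLinearMap.id 𝕜 F).prodMap A).hasFDerivAt
  exact ⟨hderiv.differentiableAt, by
    rw [hderiv.fderiv, ContinuousLinearMap.coe_prodMap, LinearMap.det_prodMap,
      ContinuousLinearMap.coe_id, LinearMap.det_id, hA, one_mul]⟩

end PhaseSpace

open Matrix in
theorem Matrix.det_exp_eq_one_of_transpose_eq_neg {m : Type*} [Fintype m] [DecidableEq m]
    {S : Matrix m m ℝ} (hS : Sᵀ = -S) : (NormedSpace.exp S).det = 1 := by
  have hnonneg : 0 ≤ (NormedSpace.exp S).det := by
    have hhalf : NormedSpace.exp S =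
        NormedSpace.exp ((2⁻¹ : ℝ) • S) * NormedSpace.exp ((2⁻¹ : ℝ) • S) := by
      rw [← Matrix.exp_add_of_commute _ _ (Commute.refl _)]
      congr 1
      module
    rw [hhalf, Matrix.det_mul]
    exact mul_self_nonneg _
  have hneg : (NormedSpace.exp (-S)).det = (NormedSpace.exp S).det := by
    rw [← hS, Matrix.exp_transpose, Matrix.det_transpose]
  have hinv : (NormedSpace.exp S).det * (NormedSpace.exp (-S)).det = 1 := by
    rw [← Matrix.det_mul, ← Matrix.exp_add_of_commute _ _ (Commute.refl S).neg_right,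
      add_neg_cancel, NormedSpace.exp_zero, Matrix.det_one]
  rw [hneg] at hinv
  nlinarith

open Matrix in
theorem hat_transpose (B : Fin 3 → ℝ) : (hat B)ᵀ = -hat B := by
  ext i j
  fin_cases i <;> fin_cases j <;> simp [hat]

/-- For a magnetic field `B = B(t)` independent of `x` and a continuously
differentiable electric field `E`, the one-step map `(xⁿ, v^{n−1/2}) ↦ (x^{n+1}, v^{n+1/2})`
of the filtered Boris algorithm preserves volume in phase space exactly: it is differentiable
and its Jacobian has determinant `1`. -/
theorem stmt16 (Bt : ℝ → Fin 3 → ℝ) (E : (Fin 3 → ℝ) → ℝ → Fin 3 → ℝ)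
    (hE : ContDiff ℝ 1 fun p : (Fin 3 → ℝ) × ℝ => E p.1 p.2) (h : ℝ) (n : ℕ) :
    let tn : ℝ := n * h
    -- the one-step map (xⁿ, v^{n-1/2}) ↦ (x^{n+1}, v^{n+1/2}):
    let F : (Fin 3 → ℝ) × (Fin 3 → ℝ) → (Fin 3 → ℝ) × (Fin 3 → ℝ) := fun p =>
      let vplus := p.2 + (h / 2) • (PsiMat h (Bt tn)).mulVec (E p.1 tn)
      let vminus := (NormedSpace.exp ((-h) • hat (Bt tn))).mulVec vplus
      let vplushalf := vminus + (h / 2) • (PsiMat h (Bt tn)).mulVec (E p.1 tn)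
      (p.1 + h • vplushalf, vplushalf)
    ∀ p : (Fin 3 → ℝ) × (Fin 3 → ℝ),
      DifferentiableAt ℝ F p ∧ LinearMap.det (fderiv ℝ F p).toLinearMap = 1 := by
  intro tn F p
  set φ : (Fin 3 → ℝ) → Fin 3 → ℝ := fun x => (h / 2) • (PsiMat h (Bt tn)).mulVec (E x tn)
  set M := NormedSpace.exp ((-h) • hat (Bt tn))
  have hEt : Differentiable ℝ fun x => E x tn :=
    (hE.differentiable one_ne_zero).comp (differentiable_id.prodMk (differentiable_const tn))
  have hφ : Differentiable ℝ φ :=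
    ((Matrix.toLin' (PsiMat h (Bt tn))).toContinuousLinearMap.differentiable.comp hEt).const_smul
      (h / 2)
  have hM : LinearMap.det (Matrix.toLin' M) = 1 := by
    rw [LinearMap.det_toLin']
    exact Matrix.det_exp_eq_one_of_transpose_eq_neg <| by
      rw [Matrix.transpose_smul, hat_transpose, smul_neg]
  have hfactor : F =
      drift (h • ·) ∘ kick φ ∘ Prod.map id (Matrix.toLin' M).toContinuousLinearMap ∘ kick φ :=
    rfl
  rw [hfactor]
  exact (hasUnitJacobianAt_drift (differentiable_id.const_smul h _)).comp <|
    (hasUnitJacobianAt_kick (hφ _)).comp <| (hasUnitJacobianAt_prodMap_id hM).comp <|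
    hasUnitJacobianAt_kick (hφ _)
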